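/- Delay robustness of the cascaded FCT estimator: suppose ε₂(t) = 0 for all t > T₁ (the perturbation of the second node's regression vanishes in finite time, possibly delayed), Δ₂ is continuous with Δ₂(t) ≥ ε > 0 for t > 0, and θ̂⁽²⁾ solves θ̂⁽²⁾' = γΔ₂(Δ₂θ⁽²⁾ + Δ₂·η(t) − Δ₂θ̂⁽²⁾) where η(t) = 0 for t > T₁. Then with w₂ and the clipped reconstruction as in the DREM-FCT scheme restarted analysis, there exists T₂ > T₁ such that the reconstructed estimate equals θ⁽²⁾ exactly for all t > T₂. -/

import Mathlib

/-!
For `t > T₁` the error `θ̂⁽²⁾ - θ⁽²⁾` solves the unperturbed linear equation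
`e' = -γΔ₂² e`, so `θ̂⁽²⁾(t) - θ⁽²⁾ = w(t) (θ̂⁽²⁾(T₁) - θ⁽²⁾)` with
`w(t) = exp (-γ ∫_{T₁}^t Δ₂²)`, and this identity can be solved for `θ⁽²⁾` whenever `w(t) ≠ 1`.
Since `Δ₂² ≥ ε²`, `w(t) → 0`; once `w(t) ≤ 1 - μ` the clipping is inactive and the
reconstruction returns `θ⁽²⁾` exactly.
-/

open Real Filter Set Topology intervalIntegral

theorem inv_one_sub_smul_sub_smul_eq {K V : Type*} [Field K] [AddCommGroup V] [Module K V]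
    {w : K} (hw : w ≠ 1) {x x₀ θ : V} (hx : x - θ = w • (x₀ - θ)) :
    (1 - w)⁻¹ • (x - w • x₀) = θ := by
  have hx' : x - w • x₀ = (1 - w) • θ := by
    rw [sub_eq_iff_eq_add.mp hx]
    module
  rw [hx', inv_smul_smul₀ (sub_ne_zero.mpr hw.symm)]

theorem eq_of_hasDerivAt_zero_of_continuousOn {E : Type*} [NormedAddCommGroup E]
    [NormedSpace ℝ E] [CompleteSpace E] {f : ℝ → E} {a b : ℝ} (hab : a ≤ b)
    (hcont : ContinuousOn f (Icc a b)) (hderiv : ∀ x ∈ Ioo a b, HasDerivAt f 0 x) :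
    f b = f a := by
  have := integral_eq_sub_of_hasDerivAt_of_le hab hcont hderiv intervalIntegrable_const
  rwa [integral_zero, eq_comm, sub_eq_zero] at this

theorem eq_exp_neg_integral_smul_of_hasDerivAt {E : Type*} [NormedAddCommGroup E]
    [NormedSpace ℝ E] [CompleteSpace E] {a : ℝ → ℝ} (ha : Continuous a) {x : ℝ → E} {t₀ : ℝ}
    (hx₀ : ContinuousWithinAt x (Ici t₀) t₀) (hx : ∀ t, t₀ < t → HasDerivAt x (-a t • x t) t)
    {t : ℝ} (ht : t₀ ≤ t) :
    x t = exp (-∫ s in t₀..t, a s) • x t₀ := by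
  set A : ℝ → ℝ := fun u => ∫ s in t₀..u, a s
  have hA : ∀ u, HasDerivAt A (a u) u := fun u => (ha.integral_hasStrictDerivAt t₀ u).hasDerivAt
  have hxc : ContinuousOn x (Icc t₀ t) := by
    intro u hu
    rcases hu.1.eq_or_lt with rfl | hlt
    · exact hx₀.mono Icc_subset_Ici_self
    · exact (hx u hlt).continuousAt.continuousWithinAt
  have hconst : exp (A t) • x t = x t₀ := by
    have hA₀ : A t₀ = 0 := integral_same
    rw [← one_smul ℝ (x t₀), ← exp_zero, ← hA₀]
    refine eq_of_hasDerivAt_zero_of_continuousOn (f := fun u => exp (A u) • x u) ht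
      (((continuous_iff_continuousAt.2 fun u => (hA u).continuousAt).rexp).continuousOn.smul hxc)
      fun u hu => ?_
    have h := (hA u).exp.smul (hx u hu.1)
    rwa [smul_smul, ← add_smul, mul_neg, neg_add_cancel, zero_smul] at h
  rw [← hconst, smul_smul, ← exp_add, neg_add_cancel, exp_zero, one_smul]

theorem tendsto_integral_atTop_of_le {f : ℝ → ℝ} (hf : Continuous f) {c t₀ : ℝ} (hc : 0 < c)
    (hcf : ∀ t, t₀ < t → c ≤ f t) : Tendsto (fun t => ∫ s in t₀..t, f s) atTop atTop := by
  refine tendsto_atTop_mono' _ ?_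
    ((tendsto_atTop_add_const_right atTop (-t₀) tendsto_id).atTop_mul_const hc)
  filter_upwards [eventually_ge_atTop t₀] with t ht
  calc (t + -t₀) * c = ∫ _ in t₀..t, c := by simp [sub_eq_add_neg]
    _ ≤ ∫ s in t₀..t, f s := integral_mono_on_of_le_Ioo ht intervalIntegrable_const
        (hf.intervalIntegrable _ _) fun s hs => hcf s hs.1

/-- Delay robustness of the cascaded FCT estimator: if the perturbation `η` of the
second node's regression vanishes for `t > T₁`, `Δ₂` is continuous with
`Δ₂(t) ≥ ε > 0` for `t > 0`, and `θ̂⁽²⁾' = γΔ₂(Δ₂θ⁽²⁾ + Δ₂η − Δ₂θ̂⁽²⁾)`, then with the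
clipped reconstruction `(θ̂⁽²⁾(t) − w_c(t)θ̂⁽²⁾(T₁))/(1 − w_c(t))`,
`w_c(t) = min(e^{−γ∫_{T₁}^t Δ₂²}, 1−μ)`, there exists `T₂ > T₁` such that the
reconstructed estimate equals `θ⁽²⁾` exactly for all `t > T₂`. -/
theorem stmt15 {q : ℕ} (γ ε μ T₁ : ℝ) (hγ : 0 < γ) (hε : 0 < ε)
    (hμ : μ ∈ Set.Ioo (0:ℝ) 1) (hT₁ : 0 ≤ T₁)
    (Δ₂ : ℝ → ℝ) (hΔ₂ : Continuous Δ₂) (hΔ₂ε : ∀ t : ℝ, 0 < t → ε ≤ Δ₂ t)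
    (θ₂ : Fin q → ℝ) (η : ℝ → (Fin q → ℝ)) (hη : ∀ t : ℝ, T₁ < t → η t = 0)
    (θh₂ : ℝ → (Fin q → ℝ))
    (hθh₂ : ∀ t : ℝ, 0 ≤ t →
      HasDerivAt θh₂ ((γ * Δ₂ t) • (Δ₂ t • θ₂ + Δ₂ t • η t - Δ₂ t • θh₂ t)) t) :
    ∃ T₂ : ℝ, T₁ < T₂ ∧ ∀ t : ℝ, T₂ < t →
      (1 - min (Real.exp (-γ * ∫ s in T₁..t, (Δ₂ s) ^ 2)) (1 - μ))⁻¹ •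
        (θh₂ t - min (Real.exp (-γ * ∫ s in T₁..t, (Δ₂ s) ^ 2)) (1 - μ) • θh₂ T₁) =
      θ₂ := by
  obtain ⟨hμ0, hμ1⟩ := hμ
  have herror : ∀ t, T₁ ≤ t →
      θh₂ t - θ₂ = exp (-γ * ∫ s in T₁..t, Δ₂ s ^ 2) • (θh₂ T₁ - θ₂) := by
    intro t ht
    rw [neg_mul, ← integral_const_mul]
    refine eq_exp_neg_integral_smul_of_hasDerivAt (x := fun t => θh₂ t - θ₂)
      (by fun_prop) ((hθh₂ T₁ hT₁).sub_const θ₂).continuousAt.continuousWithinAt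
      (fun s hs => ?_) ht
    convert (hθh₂ s (hT₁.trans hs.le)).sub_const θ₂ using 1
    rw [hη s hs]
    module
  have hdecay : Tendsto (fun t => exp (-γ * ∫ s in T₁..t, Δ₂ s ^ 2)) atTop (𝓝 0) := by
    simp only [neg_mul]
    exact tendsto_exp_neg_atTop_nhds_zero.comp <| Tendsto.const_mul_atTop hγ <|
      tendsto_integral_atTop_of_le (by fun_prop) (pow_pos hε 2) fun s hs =>
        pow_le_pow_left₀ hε.le (hΔ₂ε s (hT₁.trans_lt hs)) 2
  obtain ⟨T₂, hT₂⟩ := ((hdecay.eventually (gt_mem_nhds (sub_pos.2 hμ1))).and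
    (eventually_gt_atTop T₁)).exists_forall_of_atTop
  refine ⟨T₂, (hT₂ T₂ le_rfl).2, fun t ht => ?_⟩
  obtain ⟨hw, hT₁t⟩ := hT₂ t ht.le
  rw [min_eq_left hw.le]
  exact inv_one_sub_smul_sub_smul_eq (hw.trans (sub_lt_self 1 hμ0)).ne (herror t hT₁t.le)
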